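/- Let Γ be a colored tree. For every uncolored vertex v of Γ and every minimally complete subset Y ⊆ E(Γ): ⟨s_v, v_Y⟩ = 1 if Y contains at least one edge of the subtree rooted at v, and ⟨s_v, v_Y⟩ = 0 otherwise. -/

import Mathlib

noncomputable section
open Classical

/-- A rose tree whose leaves ("colored vertices") carry labels of type `α` and whose
internal vertices ("uncolored vertices") are unlabelled. -/
inductive CTree (α : Type) : Type
  | leaf (a : α) : CTree α
  | node (ts : List (CTree α)) : CTree α

namespace CTree

variable {α : Type}

/-- The subtree of `t` at a position `p` (a list of child indices), if it exists. -/
def sub : CTree α → List ℕ → Option (CTree α)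
  | t, [] => some t
  | leaf _, _ :: _ => none
  | node ts, i :: p =>
      match ts[i]? with
      | some c => sub c p
      | none => none

/-- All lists of natural numbers of length at most `k` with entries `< m`. -/
def allLists (m : ℕ) : ℕ → List (List ℕ)
  | 0 => [[]]
  | k + 1 => [] :: (List.range m).flatMap (fun i => (allLists m k).map (i :: ·))

/-- The finite set of positions of vertices of `t`. -/
def vertS (t : CTree α) : Finset (List ℕ) :=
  (allLists (sizeOf t) (sizeOf t)).toFinset.filter (fun p => (t.sub p).isSome)

/-- The finite set of positions of uncolored (internal) vertices of `t`. -/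
def uncS (t : CTree α) : Finset (List ℕ) :=
  (allLists (sizeOf t) (sizeOf t)).toFinset.filter (fun p => ∃ ts, t.sub p = some (node ts))

/-- The finite set of positions of colored vertices (leaves) of `t`. -/
def colS (t : CTree α) : Finset (List ℕ) :=
  (allLists (sizeOf t) (sizeOf t)).toFinset.filter (fun p => ∃ a, t.sub p = some (leaf a))

/-- Edges of `t` are identified with the positions of non-root vertices (an edge joins
the vertex at `p ≠ []` to its parent at `p.dropLast`). -/
def edgeS (t : CTree α) : Finset (List ℕ) := (vertS t).erase []

/-- `t` is a colored tree: every internal vertex has at least one child (so the leaves,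
i.e. the childless vertices, are exactly the colored vertices) and the root is
uncolored. -/
def IsColoredTree (t : CTree α) : Prop :=
  (∀ p, t.sub p ≠ some (node ([] : List (CTree α)))) ∧ ∃ ts, t = node ts

/-- The weight `w_d ∈ M` of an edge `d`: the sum of the dual basis vectors `e_u^*`
over uncolored vertices `u` that are descendants of the upper endpoint of `d` but not
descendants of the lower endpoint of `d`. -/
def wt (t : CTree α) (d : List ℕ) : List ℕ → ℤ := fun u =>
  if u ∈ uncS t ∧ d.dropLast <+: u ∧ ¬ d <+: u then 1 else 0

/-- `s_v ∈ M` : the sum of `e_u^*` over the uncolored descendants `u` of `v`;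
`s(Γ) = sv t []`. -/
def sv (t : CTree α) (v : List ℕ) : List ℕ → ℤ := fun u =>
  if u ∈ uncS t ∧ v <+: u then 1 else 0

/-- The pairing between `M = Hom(ℤ^g, ℤ)` and `ℤ^g` (both realized as integer-valued
functions on the uncolored vertices of `t`). -/
def pairZ (t : CTree α) (μ x : List ℕ → ℤ) : ℤ := ∑ p ∈ uncS t, μ p * x p

/-- The pairing between `M` and `ℝ^g`. -/
def pairR (t : CTree α) (μ : List ℕ → ℤ) (x : List ℕ → ℝ) : ℝ :=
  ∑ p ∈ uncS t, (μ p : ℝ) * x p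

/-- The multiset of edges of the (downward) path from the vertex `v` to the vertex `c`;
each edge occurs with multiplicity one. -/
def pathEdges (t : CTree α) (v c : List ℕ) : Multiset (List ℕ) :=
  ((edgeS t).filter (fun d => v <+: d ∧ d ≠ v ∧ d <+: c)).val

/-- The relation `A ∼ B` on multisets of edges: `A` and `B` consist exactly of the edges
of two non-self-crossing paths from a common vertex to two colored vertices. -/
def Sim (t : CTree α) (A B : Multiset (List ℕ)) : Prop :=
  ∃ v ∈ vertS t, ∃ c₁ ∈ colS t, ∃ c₂ ∈ colS t, v <+: c₁ ∧ v <+: c₂ ∧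
    A = pathEdges t v c₁ ∧ B = pathEdges t v c₂

/-- `Y` is a minimally complete subset of the set of edges of `t`: every
(non-self-crossing) path from the root to a colored vertex contains exactly one edge
of `Y`. -/
def MinComplete (t : CTree α) (Y : Finset (List ℕ)) : Prop :=
  Y ⊆ edgeS t ∧ ∀ c ∈ colS t, ∃! d, d ∈ Y ∧ d <+: c

/-- The finite set of minimally complete subsets of the edge set of `t`. -/
def MCfin (t : CTree α) : Finset (Finset (List ℕ)) :=
  (edgeS t).powerset.filter (fun Y => MinComplete t Y)

/-- The dual cone `C(Γ) = {x ∈ ℝ^g | ⟨w_d, x⟩ ≥ 0 for all edges d}`. -/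
def dualCone (t : CTree α) : Set (List ℕ → ℝ) :=
  {x | (∀ p, p ∉ uncS t → x p = 0) ∧ ∀ d ∈ edgeS t, 0 ≤ pairR t (wt t d) x}

/-- The ray spanned by a vector `v`. -/
def ray (v : List ℕ → ℝ) : Set (List ℕ → ℝ) := {x | ∃ c : ℝ, 0 ≤ c ∧ x = c • v}

/-- `F` is a one-dimensional face (extreme ray) of the convex cone `C`. -/
def IsOneDimFace (C F : Set (List ℕ → ℝ)) : Prop :=
  F ⊆ C ∧ (∃ v, v ≠ 0 ∧ F = ray v) ∧
    ∀ x ∈ C, ∀ y ∈ C, x + y ∈ F → x ∈ F ∧ y ∈ F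

/-- The convex cone generated by a set `G ⊆ ℤ^g` inside `ℝ^g`: all finite nonnegative
real combinations of elements of `G`. -/
def coneHull (G : Set (List ℕ → ℤ)) : Set (List ℕ → ℝ) :=
  {x | ∃ (F : Finset (List ℕ → ℤ)) (c : (List ℕ → ℤ) → ℝ),
    ↑F ⊆ G ∧ (∀ v ∈ F, 0 ≤ c v) ∧
    x = ∑ v ∈ F, c v • (fun p => ((v p : ℤ) : ℝ))}

/-- `e_{v_0} ∈ ℤ^g`: the basis vector of the root vertex. -/
def e0 : List ℕ → ℤ := fun p => if p = [] then 1 else 0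

/-- The inclusion `ℤ^{g_i} → ℤ^g` corresponding to the `i`-th principal subtree. -/
def shift (i : ℕ) (f : List ℕ → ℤ) : List ℕ → ℤ := fun p =>
  match p with
  | [] => 0
  | j :: q => if j = i then f q else 0

def isNodeB : CTree α → Bool
  | leaf _ => false
  | node _ => true

/-- The recursively defined set `G(Γ) ⊆ ℤ^g`: `G(Γ)` consists of all vectors
`e_{v₀} + ∑_{i ∈ J} (w_i - e_{v₀})` where `J` ranges over subsets of the set of indices
of non-trivial principal subtrees and `w_i ∈ G(Γ_i)` (in particular if `g = 1` this is
just `{e_{v₀}}`). -/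
def Gset : CTree α → Set (List ℕ → ℤ)
  | leaf _ => ∅
  | node ts =>
      {v | ∃ (J : Finset (Fin ts.length)) (w : Fin ts.length → (List ℕ → ℤ)),
        (∀ i ∈ J, (ts.get i).isNodeB = true ∧ w i ∈ Gset (ts.get i)) ∧
        v = e0 + ∑ i ∈ J, (shift i.1 (w i) - e0)}
  termination_by t => sizeOf t
  decreasing_by
    have h1 : ts.get i ∈ ts := List.get_mem ts i
    have h2 := List.sizeOf_lt_of_mem h1
    simp only [CTree.node.sizeOf_spec]
    omega

/-- Transport of a set of edges of `Γ` to the `i`-th principal subtree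
(`Y ∩ E(Γ_i)`, rewritten in the coordinates of `Γ_i`). -/
def sect (i : ℕ) (Y : Finset (List ℕ)) : Finset (List ℕ) :=
  (Y.filter (fun p => p.head? = some i)).image List.tail

/-- The recursively defined vector `v_Y ∈ ℤ^g` attached to a (minimally complete) set
of edges `Y`: `v_Y = e_{v₀} + ∑_{i ∈ I} (v_{Y_i} - e_{v₀})` where
`I = {i | d_i ∉ Y}` and `Y_i = Y ∩ E(Γ_i)` (if `g = 1` this is just `e_{v₀}`). -/
def vY : CTree α → Finset (List ℕ) → (List ℕ → ℤ)
  | leaf _, _ => 0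
  | node ts, Y =>
      e0 + ∑ i ∈ Finset.univ.filter (fun i : Fin ts.length => [i.1] ∉ Y),
        (shift i.1 (vY (ts.get i) (sect i.1 Y)) - e0)
  termination_by t => sizeOf t
  decreasing_by
    have h1 : ts.get i ∈ ts := List.get_mem ts i
    have h2 := List.sizeOf_lt_of_mem h1
    simp only [CTree.node.sizeOf_spec]
    omega

/-- The set of balanced labellings `X(Γ) ⊆ ℂ^{E(Γ)}`. -/
def Xbal (t : CTree α) : Set (List ℕ → ℂ) :=
  {x | ∀ v ∈ uncS t, ∀ c ∈ colS t, ∀ c' ∈ colS t, v <+: c → v <+: c' →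
    ((pathEdges t v c).map x).prod = ((pathEdges t v c').map x).prod}

/-- `Y ⊆ E(Γ)` is complete: for every finite multiset `A` of edges, the monomial
`∏_{d ∈ A} x_d` vanishes identically on `{x ∈ X(Γ) | x_y = 0 ∀ y ∈ Y}` if and only if
`A` contains at least one edge belonging to `Y`. -/
def CompleteSet (t : CTree α) (Y : Finset (List ℕ)) : Prop :=
  ∀ A : Multiset (List ℕ), (∀ d ∈ A, d ∈ edgeS t) →
    ((∀ x ∈ Xbal t, (∀ y ∈ Y, x y = 0) → (A.map x).prod = 0) ↔ ∃ d ∈ A, d ∈ Y)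

/-- A partition of a type `I`: a finite collection of nonempty pairwise disjoint
subsets covering `I`. -/
def IsPart {I : Type} (P : Finset (Finset I)) : Prop :=
  (∀ S ∈ P, S ≠ ∅) ∧ ∀ a : I, ∃! S, S ∈ P ∧ a ∈ S

/-- The tree with a single uncolored vertex whose children are the colored vertices
labelled by the elements of `S`. -/
def blockTree {I : Type} (S : Finset I) : CTree I := node (S.toList.map leaf)

/-- The colored tree `Γ_P` of a partition `P`: the root has one child for each block
`S ∈ P`, an uncolored vertex whose children are colored vertices labelled by the
elements of `S`. -/
def gammaP {I : Type} (P : Finset (Finset I)) : CTree I := node (P.toList.map blockTree)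

/-- A tree homomorphism `t → t'`, described by a map `f` on vertex positions: it sends
root to root, vertices to vertices, the two endpoints of any edge to the two endpoints
of an edge, and restricts to a label-preserving bijection between the colored
vertices. -/
def TreeHom {I : Type} (t t' : CTree I) (f : List ℕ → List ℕ) : Prop :=
  f [] = [] ∧
  (∀ p ∈ vertS t, f p ∈ vertS t') ∧
  (∀ p ∈ vertS t, p ≠ [] →
    (f p ≠ [] ∧ (f p).dropLast = f p.dropLast) ∨
    (f p.dropLast ≠ [] ∧ (f p.dropLast).dropLast = f p)) ∧
  (∀ p a, t.sub p = some (leaf a) → t'.sub (f p) = some (leaf a)) ∧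
  Set.BijOn f {p | ∃ a, t.sub p = some (leaf a)} {q | ∃ a, t'.sub q = some (leaf a)}

/-- A partition `P` of the label set is compatible with the colored tree `t` if there
exists a tree homomorphism `t → Γ_P`. -/
def Compatible {I : Type} (t : CTree I) (P : Finset (Finset I)) : Prop :=
  ∃ f, TreeHom t (gammaP P) f

/-- `C_y ⊆ I` : the labels of the colored vertices whose path from the root contains
the edge `y`. -/
def Cy {I : Type} [Fintype I] [DecidableEq I] (t : CTree I) (y : List ℕ) : Finset I :=
  Finset.univ.filter (fun a => ∃ p, t.sub p = some (leaf a) ∧ y <+: p)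

end CTree

/-!
Pairing with `s_v` sums the coordinates of `v_Y` over the uncolored descendants of `v`.
One level of the recursion gives `v_Y` the root coordinate `1 - |I|`, the coordinates of
`v_{Y_i}` on `Γ_i` for `i ∈ I`, and zeros on the other principal subtrees. Hence, by
induction, the coordinates of every `v_Y` sum to `1`, and their sum over the descendants of
`v` is `0` if `Y` contains an edge of the path from `v_0` to `v` and `1` otherwise. Since `Y`
meets every path from `v_0` to a colored vertex exactly once, it avoids the path to `v`
exactly when it contains an edge of the subtree rooted at `v`.
-/

namespace CTree

variable {α : Type}

open Finset

theorem induction_on_children {P : CTree α → Prop} (hleaf : ∀ a, P (leaf a))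
    (hnode : ∀ ts : List (CTree α), (∀ i : Fin ts.length, P (ts.get i)) → P (node ts)) :
    ∀ t, P t
  | leaf a => hleaf a
  | node ts => hnode ts fun i => induction_on_children hleaf hnode (ts.get i)
termination_by t => sizeOf t
decreasing_by
  have := List.sizeOf_get ts i
  simp only [node.sizeOf_spec]
  omega

@[simp]
lemma sub_nil (t : CTree α) : t.sub [] = some t := by
  cases t <;> rfl

@[simp]
lemma leaf_sub_cons (a : α) (i : ℕ) (p : List ℕ) : (leaf a).sub (i :: p) = none := rfl

lemma node_sub_cons (ts : List (CTree α)) (i : Fin ts.length) (p : List ℕ) :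
    (node ts).sub (i :: p) = (ts.get i).sub p := by
  simp [sub]

lemma node_sub_cons_of_le {ts : List (CTree α)} {i : ℕ} (h : ts.length ≤ i) (p : List ℕ) :
    (node ts).sub (i :: p) = none := by
  simp [sub, List.getElem?_eq_none h]

lemma sub_append (p : List ℕ) (t : CTree α) (q : List ℕ) :
    t.sub (p ++ q) = (t.sub p).bind (·.sub q) := by
  induction p generalizing t with
  | nil => simp
  | cons i p ih =>
    cases t with
    | leaf a => rfl
    | node ts =>
      rcases lt_or_ge i ts.length with h | h
      · simpa [node_sub_cons ts ⟨i, h⟩] using ih (ts.get ⟨i, h⟩)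
      · simp [node_sub_cons_of_le h]

lemma length_lt_sizeOf (ts : List (CTree α)) : ts.length < sizeOf ts := by
  induction ts with
  | nil => simp
  | cons t ts ih =>
    have : 0 < sizeOf t := by cases t <;> simp
    simp only [List.length_cons, List.cons.sizeOf_spec]
    omega

lemma bounds_of_isSome_sub {p : List ℕ} {t : CTree α} (h : (t.sub p).isSome) :
    p.length < sizeOf t ∧ ∀ i ∈ p, i < sizeOf t := by
  induction p generalizing t with
  | nil => cases t <;> simp
  | cons i p ih =>
    cases t with
    | leaf a => simp at h
    | node ts =>
      rcases lt_or_ge i ts.length with hi | hi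
      · rw [node_sub_cons ts ⟨i, hi⟩] at h
        have hchild := List.sizeOf_get ts ⟨i, hi⟩
        have hlen := length_lt_sizeOf ts
        obtain ⟨ihlen, ihmem⟩ := ih h
        simp only [List.length_cons, List.mem_cons, node.sizeOf_spec, forall_eq_or_imp]
        exact ⟨by omega, by omega, fun j hj => by have := ihmem j hj; omega⟩
      · simp [node_sub_cons_of_le hi] at h

lemma mem_allLists_of_length_le {m k : ℕ} {p : List ℕ} (hlen : p.length ≤ k) (hp : ∀ i ∈ p, i < m) :
    p ∈ allLists m k := by
  induction k generalizing p with
  | zero => simp_all [allLists]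
  | succ k ih =>
    cases p with
    | nil => simp [allLists]
    | cons i p =>
      simp only [List.mem_cons, forall_eq_or_imp] at hp
      simp only [allLists, List.mem_cons, List.mem_flatMap, List.mem_map, List.mem_range]
      exact Or.inr ⟨i, hp.1, p, ih (by simpa using hlen) hp.2, rfl⟩

lemma mem_allLists_of_isSome_sub {t : CTree α} {p : List ℕ} (h : (t.sub p).isSome) :
    p ∈ (allLists (sizeOf t) (sizeOf t)).toFinset :=
  have ⟨hlen, hp⟩ := bounds_of_isSome_sub h
  List.mem_toFinset.2 (mem_allLists_of_length_le hlen.le hp)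

lemma mem_vertS {t : CTree α} {p : List ℕ} : p ∈ vertS t ↔ (t.sub p).isSome := by
  simpa [vertS] using mem_allLists_of_isSome_sub

lemma mem_uncS {t : CTree α} {p : List ℕ} : p ∈ uncS t ↔ ∃ ts, t.sub p = some (node ts) := by
  simp only [uncS, mem_filter, and_iff_right_iff_imp, forall_exists_index]
  exact fun _ h => mem_allLists_of_isSome_sub (by simp [h])

lemma mem_colS {t : CTree α} {p : List ℕ} : p ∈ colS t ↔ ∃ a, t.sub p = some (leaf a) := by
  simp only [colS, mem_filter, and_iff_right_iff_imp, forall_exists_index]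
  exact fun _ h => mem_allLists_of_isSome_sub (by simp [h])

lemma mem_edgeS {t : CTree α} {p : List ℕ} : p ∈ edgeS t ↔ p ≠ [] ∧ (t.sub p).isSome := by
  rw [edgeS, mem_erase, mem_vertS]

lemma isSome_sub_of_mem_uncS {t : CTree α} {p : List ℕ} (h : p ∈ uncS t) : (t.sub p).isSome := by
  obtain ⟨_, h⟩ := mem_uncS.1 h
  simp [h]

lemma cons_mem_uncS_node {ts : List (CTree α)} (j : Fin ts.length) {q : List ℕ} :
    (j.1 :: q) ∈ uncS (node ts) ↔ q ∈ uncS (ts.get j) := by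
  rw [mem_uncS, mem_uncS, node_sub_cons]

lemma cons_mem_colS_node {ts : List (CTree α)} (j : Fin ts.length) {q : List ℕ} :
    (j.1 :: q) ∈ colS (node ts) ↔ q ∈ colS (ts.get j) := by
  rw [mem_colS, mem_colS, node_sub_cons]

lemma sum_uncS_node {M : Type*} [AddCommMonoid M] (ts : List (CTree α)) (f : List ℕ → M) :
    ∑ p ∈ uncS (node ts), f p = f [] + ∑ j : Fin ts.length, ∑ q ∈ uncS (ts.get j), f (j :: q) := by
  have hdecomp : uncS (node ts) = insert [] (univ.biUnion fun j : Fin ts.length =>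
      (uncS (ts.get j)).map ⟨(j.1 :: ·), List.cons_injective⟩) := by
    ext p
    cases p with
    | nil => simp [mem_uncS]
    | cons i q =>
      simp only [mem_insert, reduceCtorEq, mem_biUnion, mem_univ,
        mem_map, Function.Embedding.coeFn_mk, List.cons.injEq, true_and, false_or]
      constructor
      · intro h
        have hi : i < ts.length := by
          by_contra! hi
          simp [mem_uncS, node_sub_cons_of_le hi] at h
        exact ⟨⟨i, hi⟩, q, (cons_mem_uncS_node ⟨i, hi⟩).1 h, rfl, rfl⟩
      · rintro ⟨j, q, hq, rfl, rfl⟩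
        exact (cons_mem_uncS_node j).2 hq
  rw [hdecomp, sum_insert (by simp), sum_biUnion]
  · simp
  · intro j _ k _ hjk
    simp only [Function.onFun, disjoint_left, mem_map, Function.Embedding.coeFn_mk]
    rintro _ ⟨q, -, rfl⟩ ⟨r, -, hr⟩
    exact hjk (Fin.ext (List.cons.inj hr).1.symm)

lemma sum_uncS_node_prefix_cons {M : Type*} [AddCommMonoid M] (ts : List (CTree α))
    (j : Fin ts.length) (q : List ℕ) (f : List ℕ → M) :
    ∑ p ∈ uncS (node ts) with j.1 :: q <+: p, f p =
      ∑ r ∈ uncS (ts.get j) with q <+: r, f (j :: r) := by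
  rw [sum_filter, sum_uncS_node, if_neg (by simp), zero_add, Fintype.sum_eq_single j, sum_filter]
  · simp only [List.cons_prefix_cons, true_and]
  · intro k hkj
    refine sum_eq_zero fun r _ => if_neg fun h => hkj ?_
    exact Fin.ext (List.cons_prefix_cons.1 h).1.symm

lemma exists_sub_eq_leaf :
    ∀ t : CTree α, (∀ p, t.sub p ≠ some (node [])) → ∃ c a, t.sub c = some (leaf a) := by
  refine induction_on_children (fun a _ => ⟨[], a, rfl⟩) fun ts ih hne => ?_
  have hpos : 0 < ts.length := List.length_pos_iff.2 fun h => hne [] (by simp [h])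
  obtain ⟨c, a, hc⟩ := ih ⟨0, hpos⟩ fun p => by rw [← node_sub_cons]; exact hne _
  exact ⟨0 :: c, a, by rwa [node_sub_cons ts ⟨0, hpos⟩]⟩

lemma exists_mem_colS_prefix {t : CTree α} (hne : ∀ p, t.sub p ≠ some (node []))
    {p : List ℕ} (hp : (t.sub p).isSome) : ∃ c ∈ colS t, p <+: c := by
  obtain ⟨s, hs⟩ := Option.isSome_iff_exists.1 hp
  obtain ⟨c, a, hc⟩ := exists_sub_eq_leaf s fun q => by
    simpa [sub_append, hs] using hne (p ++ q)
  exact ⟨p ++ c, mem_colS.2 ⟨a, by simp [sub_append, hs, hc]⟩, List.prefix_append p c⟩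

lemma mem_sect {i : ℕ} {Y : Finset (List ℕ)} {d : List ℕ} : d ∈ sect i Y ↔ (i :: d) ∈ Y := by
  simp only [sect, mem_image, mem_filter]
  constructor
  · rintro ⟨_ | ⟨k, e⟩, ⟨he, hi⟩, rfl⟩
    · simp at hi
    · simp_all
  · exact fun h => ⟨i :: d, ⟨h, rfl⟩, rfl⟩

lemma exists_mem_prefix_cons_iff {Y : Finset (List ℕ)} (hY : [] ∉ Y) (j : ℕ) (q : List ℕ) :
    (∃ d ∈ Y, d <+: j :: q) ↔ ∃ d ∈ sect j Y, d <+: q := by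
  constructor
  · rintro ⟨_ | ⟨k, d⟩, hd, hdq⟩
    · exact absurd hd hY
    · obtain ⟨rfl, hdq'⟩ := List.cons_prefix_cons.1 hdq
      exact ⟨d, mem_sect.2 hd, hdq'⟩
  · rintro ⟨d, hd, hdq⟩
    exact ⟨j :: d, mem_sect.1 hd, List.cons_prefix_cons.2 ⟨rfl, hdq⟩⟩

namespace MinComplete

variable {t : CTree α} {Y : Finset (List ℕ)}

lemma nil_not_mem (hY : MinComplete t Y) : [] ∉ Y :=
  fun h => (mem_edgeS.1 (hY.1 h)).1 rfl

lemma not_leaf (a : α) : ¬ MinComplete (leaf a) Y := by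
  intro hY
  obtain ⟨d, ⟨hd, hdnil⟩, -⟩ := hY.2 [] (mem_colS.2 ⟨a, rfl⟩)
  rw [List.prefix_nil.1 hdnil] at hd
  exact hY.nil_not_mem hd

lemma sect {ts : List (CTree α)} (hY : MinComplete (node ts) Y) (j : Fin ts.length)
    (hj : [j.1] ∉ Y) : MinComplete (ts.get j) (CTree.sect j Y) := by
  constructor
  · intro d hd
    have hedge := mem_edgeS.1 (hY.1 (mem_sect.1 hd))
    rw [node_sub_cons] at hedge
    exact mem_edgeS.2 ⟨by rintro rfl; exact hj (mem_sect.1 hd), hedge.2⟩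
  · intro c hc
    obtain ⟨_ | ⟨k, d⟩, ⟨hdY, hdc⟩, huniq⟩ := hY.2 _ ((cons_mem_colS_node j).2 hc)
    · exact absurd hdY hY.nil_not_mem
    obtain ⟨rfl, hdc'⟩ := List.cons_prefix_cons.1 hdc
    refine ⟨d, ⟨mem_sect.2 hdY, hdc'⟩, fun e ⟨heY, hec⟩ => ?_⟩
    exact (List.cons.inj (huniq _ ⟨mem_sect.1 heY, List.cons_prefix_cons.2 ⟨rfl, hec⟩⟩)).2

lemma exists_prefix_dropLast_iff (hne : ∀ p, t.sub p ≠ some (node [])) (hY : MinComplete t Y)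
    {v : List ℕ} (hv : (t.sub v).isSome) :
    (∃ d ∈ Y, v <+: d.dropLast) ↔ ¬ ∃ d ∈ Y, d <+: v := by
  constructor
  · rintro ⟨d, hdY, hvd⟩ ⟨e, heY, hev⟩
    obtain ⟨hdnil, hd⟩ := mem_edgeS.1 (hY.1 hdY)
    obtain ⟨c, hc, hdc⟩ := exists_mem_colS_prefix hne hd
    have hed : e <+: d := hev.trans (hvd.trans d.dropLast_prefix)
    obtain rfl : d = e := (hY.2 c hc).unique ⟨hdY, hdc⟩ ⟨heY, hed.trans hdc⟩
    have hlen := (hev.trans hvd).length_le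
    have hpos := List.length_pos_iff.2 hdnil
    simp only [List.length_dropLast] at hlen
    omega
  · intro hvY
    obtain ⟨c, hc, hvc⟩ := exists_mem_colS_prefix hne hv
    obtain ⟨d, ⟨hdY, hdc⟩, -⟩ := hY.2 c hc
    refine ⟨d, hdY, List.prefix_of_prefix_length_le hvc (d.dropLast_prefix.trans hdc) ?_⟩
    by_contra! hlen
    exact hvY ⟨d, hdY, List.prefix_of_prefix_length_le hdc hvc (by simp at hlen; omega)⟩

end MinComplete

lemma vY_node_nil (ts : List (CTree α)) (Y : Finset (List ℕ)) :
    vY (node ts) Y [] = 1 - (#{j : Fin ts.length | [j.1] ∉ Y} : ℤ) := by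
  rw [vY]
  simp [e0, shift, sum_const, sub_eq_add_neg]

lemma vY_node_cons (ts : List (CTree α)) (Y : Finset (List ℕ)) (j : Fin ts.length)
    (q : List ℕ) :
    vY (node ts) Y (j :: q) = if [j.1] ∈ Y then 0 else vY (ts.get j) (sect j Y) q := by
  rw [vY]
  simp only [Pi.add_apply, Finset.sum_apply, Pi.sub_apply, e0, shift, reduceCtorEq, if_false,
    sub_zero, zero_add, Fin.val_eq_val, sum_ite_eq, mem_filter, mem_univ, true_and]
  split_ifs <;> simp_all

theorem sum_uncS_vY : ∀ (t : CTree α) (Y : Finset (List ℕ)), MinComplete t Y →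
    ∑ p ∈ uncS t, vY t Y p = 1 := by
  refine induction_on_children (fun a Y hY => absurd hY (MinComplete.not_leaf a))
    fun ts ih Y hY => ?_
  have hchild (j : Fin ts.length) :
      ∑ q ∈ uncS (ts.get j), vY (node ts) Y (j :: q) = if [j.1] ∉ Y then 1 else 0 := by
    simp only [vY_node_cons, sum_ite_irrel, sum_const_zero]
    split_ifs with hj
    · rfl
    · exact ih j _ (hY.sect j hj)
  rw [sum_uncS_node, vY_node_nil, sum_congr rfl fun j _ => hchild j, sum_boole]
  ring

theorem sum_prefix_vY {v : List ℕ} {t : CTree α} {Y : Finset (List ℕ)} (hY : MinComplete t Y)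
    (hv : v ∈ uncS t) :
    ∑ p ∈ uncS t with v <+: p, vY t Y p = if ∃ d ∈ Y, d <+: v then 0 else 1 := by
  induction v generalizing t Y with
  | nil =>
    have hnot : ¬ ∃ d ∈ Y, d <+: [] := fun ⟨d, hd, hdnil⟩ =>
      hY.nil_not_mem (List.prefix_nil.1 hdnil ▸ hd)
    simp only [List.nil_prefix, filter_true, sum_uncS_vY t Y hY, if_neg hnot]
  | cons i q ih =>
    cases t with
    | leaf a => exact absurd hY (MinComplete.not_leaf a)
    | node ts =>
      have hi : i < ts.length := by
        by_contra! hi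
        simp [mem_uncS, node_sub_cons_of_le hi] at hv
      obtain ⟨j, rfl⟩ : ∃ j : Fin ts.length, j.1 = i := ⟨⟨i, hi⟩, rfl⟩
      simp only [sum_uncS_node_prefix_cons, vY_node_cons, sum_ite_irrel, sum_const_zero,
        exists_mem_prefix_cons_iff hY.nil_not_mem]
      by_cases hj : [j.1] ∈ Y
      · rw [if_pos hj, if_pos ⟨[], mem_sect.2 hj, List.nil_prefix⟩]
      · rw [if_neg hj]
        exact ih (hY.sect j hj) ((cons_mem_uncS_node j).1 hv)

lemma pairZ_sv (t : CTree α) (v : List ℕ) (x : List ℕ → ℤ) :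
    pairZ t (sv t v) x = ∑ p ∈ uncS t with v <+: p, x p := by
  rw [pairZ, sum_filter]
  exact sum_congr rfl fun p hp => by simp [sv, hp]

end CTree

/-- For every uncolored vertex `v` and every minimally complete
`Y ⊆ E(Γ)`: `⟨s_v, v_Y⟩ = 1` if `Y` contains at least one edge of the subtree rooted
at `v`, and `⟨s_v, v_Y⟩ = 0` otherwise. -/
theorem pairing_sv_vY {α : Type} (t : CTree α) (ht : t.IsColoredTree) :
    ∀ v ∈ CTree.uncS t, ∀ Y : Finset (List ℕ), t.MinComplete Y →
      CTree.pairZ t (CTree.sv t v) (CTree.vY t Y) =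
        if ∃ d ∈ Y, v <+: d.dropLast then 1 else 0 := by
  intro v hv Y hY
  rw [CTree.pairZ_sv, CTree.sum_prefix_vY hY hv]
  simp only [hY.exists_prefix_dropLast_iff ht.1 (CTree.isSome_sub_of_mem_uncS hv), ite_not]
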